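/- Let K be a field, d : K → K a derivation, σ a finite index set, and I an ideal of the polynomial ring K[x_i : i ∈ σ]. Let h, g be polynomials such that h^ℓ · g ∈ I for some natural number ℓ. Suppose a, b : σ → K are points such that f(a) = 0 and τf(a,b) = 0 for all f ∈ I, and suppose h(a) ≠ 0. Then g(a) = 0 and τg(a,b) = 0. -/

import Mathlib

open MvPolynomial

/-- Evaluation at `a` of the polynomial `f^d` obtained by applying `d : K → K`
to each coefficient of `f`. -/
noncomputable def evalCoeffD {K : Type*} [Field K] {σ : Type*} [Fintype σ]
    (d : K → K) (f : MvPolynomial σ K) (a : σ → K) : K :=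
  ∑ m ∈ f.support, d (f.coeff m) * ∏ i, a i ^ m i

/-- The prolongation `τf(a,b) = f^d(a) + Σ_i (∂f/∂x_i)(a) · b_i`. -/
noncomputable def tauProlong {K : Type*} [Field K] {σ : Type*} [Fintype σ]
    (d : K → K) (f : MvPolynomial σ K) (a b : σ → K) : K :=
  evalCoeffD d f a + ∑ i, (eval a (pderiv i f)) * b i

lemma map_zero_of_map_add {M G : Type*} [AddZeroClass M] [AddGroup G] {f : M → G}
    (hf : ∀ x y, f (x + y) = f x + f y) : f 0 = 0 :=
  (AddMonoidHom.mk' f hf).map_zero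

section
variable {K : Type*} [Field K] {σ : Type*} [Fintype σ] {d : K → K}

lemma evalCoeffD_eq_sum (f : MvPolynomial σ K) (a : σ → K) :
    evalCoeffD d f a = (AddMonoidAlgebra.coeff f).sum fun m c => d c * ∏ i, a i ^ m i :=
  rfl

lemma evalCoeffD_add (hadd : ∀ x y, d (x + y) = d x + d y) (f g : MvPolynomial σ K)
    (a : σ → K) : evalCoeffD d (f + g) a = evalCoeffD d f a + evalCoeffD d g a := by
  simp only [evalCoeffD_eq_sum]
  exact Finsupp.sum_add_index' (by simp [map_zero_of_map_add hadd])
    (fun m x y => by rw [hadd, add_mul])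

lemma evalCoeffD_monomial (hadd : ∀ x y, d (x + y) = d x + d y) (m : σ →₀ ℕ) (c : K)
    (a : σ → K) : evalCoeffD d (monomial m c) a = d c * ∏ i, a i ^ m i := by
  rw [evalCoeffD_eq_sum]
  exact sum_monomial_eq (by simp [map_zero_of_map_add hadd])

lemma evalCoeffD_mul (hadd : ∀ x y, d (x + y) = d x + d y)
    (hmul : ∀ x y, d (x * y) = x * d y + y * d x) (f g : MvPolynomial σ K) (a : σ → K) :
    evalCoeffD d (f * g) a = eval a f * evalCoeffD d g a + eval a g * evalCoeffD d f a := by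
  induction f using MvPolynomial.induction_on' with
  | add p q hp hq =>
    rw [add_mul, evalCoeffD_add hadd, hp, hq, map_add, evalCoeffD_add hadd]
    ring
  | monomial m c =>
    induction g using MvPolynomial.induction_on' with
    | add p q hp hq =>
      rw [mul_add, evalCoeffD_add hadd, hp, hq, map_add, evalCoeffD_add hadd]
      ring
    | monomial m' c' =>
      simp only [monomial_mul, evalCoeffD_monomial hadd, eval_monomial, hmul,
        Finsupp.prod_pow, Finsupp.coe_add, Pi.add_apply, pow_add, Finset.prod_mul_distrib]
      ring

lemma tauProlong_mul (hadd : ∀ x y, d (x + y) = d x + d y)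
    (hmul : ∀ x y, d (x * y) = x * d y + y * d x) (f g : MvPolynomial σ K) (a b : σ → K) :
    tauProlong d (f * g) a b = eval a f * tauProlong d g a b + eval a g * tauProlong d f a b := by
  have hsum : ∑ i, eval a (pderiv i (f * g)) * b i
      = eval a f * ∑ i, eval a (pderiv i g) * b i + eval a g * ∑ i, eval a (pderiv i f) * b i := by
    simp only [pderiv_mul, map_add, map_mul, Finset.mul_sum, ← Finset.sum_add_distrib]
    exact Finset.sum_congr rfl fun i _ => by ring
  rw [tauProlong, tauProlong, tauProlong, evalCoeffD_mul hadd hmul, hsum]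
  ring

end

theorem tauProlong_vanish_saturation {K : Type*} [Field K] {σ : Type*} [Fintype σ]
    (d : K → K)
    (hadd : ∀ x y, d (x + y) = d x + d y)
    (hmul : ∀ x y, d (x * y) = x * d y + y * d x)
    (I : Ideal (MvPolynomial σ K)) (h g : MvPolynomial σ K) (ℓ : ℕ)
    (hmem : h ^ ℓ * g ∈ I) (a b : σ → K)
    (hI : ∀ f ∈ I, eval a f = 0 ∧ tauProlong d f a b = 0)
    (hha : eval a h ≠ 0) :
    eval a g = 0 ∧ tauProlong d g a b = 0 := by
  obtain ⟨hev, htau⟩ := hI _ hmem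
  have hhℓ : eval a (h ^ ℓ) ≠ 0 := by
    rw [map_pow]
    exact pow_ne_zero ℓ hha
  have hg : eval a g = 0 := by
    rw [map_mul] at hev
    exact (mul_eq_zero.mp hev).resolve_left hhℓ
  rw [tauProlong_mul hadd hmul, hg, zero_mul, add_zero] at htau
  exact ⟨hg, (mul_eq_zero.mp htau).resolve_left hhℓ⟩
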